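/- arXiv:2412.16535 — 6 statements merged into one kernel-verified Lean document; each statement's English description precedes it below -/
import Mathlib

section
/- Let x_k ∈ ℝⁿ, let H_k = B_k + (c + μ₁·min{1, ‖G(x_k)‖^δ})·I where B_k is symmetric positive semidefinite with ‖B_k‖ ≤ M, c > 0, μ₁ ∈ (0,1], μ₂ ∈ (0, μ₁], δ ∈ [0,1], and let x̂_k be the minimizer of x ↦ q_k(x) + ⟨ε_k, x − x_k⟩ with q_k(x) = f(x_k) + ⟨∇f(x_k), x − x_k⟩ + g(x) + (1/2)⟨x − x_k, H_k(x − x_k)⟩ and ‖ε_k‖ ≤ (μ₂/2)·min{1, ‖G(x_k)‖^δ}·‖x̂_k − x_k‖. Then ‖G(x_k)‖ ≤ (3 + M + c)·‖x̂_k − x_k‖. -/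
/-!
The optimality condition of the subproblem makes `x̂` a fixed point of a perturbed
proximal-gradient step: `x̂ = prox_g (x̂ - v)` with `v = ∇f(x_k) + ε_k + H_k d`, `d = x̂ - x_k`.
Since `prox_g` is nonexpansive, `‖G(x_k)‖ ≤ ‖d‖ + ‖(x_k - ∇f(x_k)) - (x̂ - v)‖`, and the last
difference is `ε_k + B_k d + (c + μ₁ min{1, ‖G(x_k)‖^δ} - 1) d`, of norm at most
`(1/2 + M + 1 + c) ‖d‖`.
-/

open scoped RealInnerProductSpace

open Set

section NormedSpace

variable {E : Type*} [NormedAddCommGroup E] [NormedSpace ℝ E]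

theorem ConvexOn.sub_le_of_isMinOn_add {g h : E → ℝ} {h' : StrongDual ℝ E} {p : E}
    (hg : ConvexOn ℝ univ g) (hh : HasFDerivAt h h' p)
    (hmin : IsMinOn (fun x => g x + h x) univ p) (u : E) :
    g p - g u ≤ h' (u - p) := by
  set w := u - p
  -- Along the segment from `p` to `u`, replacing `g` by its chord gives a differentiable
  -- majorant of `g + h` that still attains its minimum over `[0, 1]` at `t = 0`.
  set F : ℝ → ℝ := fun t => (1 - t) * g p + t * g u + h (p + t • w)
  have hF : HasDerivAt F (g u - g p + h' w) 0 := by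
    have hline : HasDerivAt (fun t : ℝ => p + t • w) w 0 := by
      simpa using ((hasDerivAt_id (0 : ℝ)).smul_const w).const_add p
    have hh' : HasFDerivAt h h' (p + (0 : ℝ) • w) := by simpa using hh
    exact ((((hasDerivAt_id (0 : ℝ)).const_sub 1).mul_const (g p)).add
      ((hasDerivAt_id (0 : ℝ)).mul_const (g u)) |>.add
        (hh'.comp_hasDerivAt (0 : ℝ) hline)).congr_deriv (by ring)
  have hFmin : IsLocalMinOn F (Icc 0 1) 0 := by
    refine IsMinOn.localize fun t ht => ?_
    have hchord : g (p + t • w) ≤ (1 - t) * g p + t * g u := by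
      have hpt : p + t • w = (1 - t) • p + t • u := by simp only [w]; module
      rw [hpt]
      exact hg.2 (mem_univ p) (mem_univ u) (sub_nonneg.2 ht.2) ht.1 (sub_add_cancel 1 t)
    have hle := hmin (mem_univ (p + t • w))
    simp only [F, mem_ofPred_eq, zero_smul, add_zero, sub_zero, one_mul, zero_mul] at hle ⊢
    linarith
  have hdir : (1 : ℝ) ∈ posTangentConeAt (Icc 0 1) (0 : ℝ) :=
    mem_posTangentConeAt_of_segment_subset (by simp [segment_eq_Icc])
  have := hFmin.hasFDerivWithinAt_nonneg hF.hasFDerivAt.hasFDerivWithinAt hdir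
  simp only [ContinuousLinearMap.toSpanSingleton_apply, smul_eq_mul, one_mul] at this
  linarith

end NormedSpace

section InnerProductSpace

variable {E : Type*} [NormedAddCommGroup E] [InnerProductSpace ℝ E]

theorem hasFDerivAt_inner_add_half_inner_apply {T : E →L[ℝ] E}
    (hT : (T : E →ₗ[ℝ] E).IsSymmetric) (a z p : E) :
    HasFDerivAt (fun x => ⟪a, x - z⟫ + (1 / 2) * ⟪x - z, T (x - z)⟫)
      (innerSL ℝ (a + T (p - z))) p := by
  have hsub : HasFDerivAt (fun x => x - z) (ContinuousLinearMap.id ℝ E) p :=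
    (hasFDerivAt_id p).sub_const z
  refine (((hasFDerivAt_const a p).inner ℝ hsub).add
    (((hsub.inner ℝ (T.hasFDerivAt.comp p hsub)).const_mul (1 / 2)))).congr_fderiv ?_
  ext v
  have hsym : ⟪T (p - z), v⟫ = ⟪p - z, T v⟫ := hT _ _
  simp only [smul_apply, add_apply, ContinuousLinearMap.comp_apply,
    Function.comp_apply, ContinuousLinearMap.prod_apply, ContinuousLinearMap.id_apply,
    zero_apply, fderivInnerCLM_apply, smul_eq_mul, coe_innerSL_apply,
    inner_zero_left, inner_add_left]
  rw [real_inner_comm (T (p - z)) v, hsym]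
  ring

def IsProxPoint (g : E → ℝ) (x p : E) : Prop :=
  IsMinOn (fun u => g u + (1 / 2) * ‖u - x‖ ^ 2) univ p

theorem isProxPoint_iff {g : E → ℝ} (hg : ConvexOn ℝ univ g) (x p : E) :
    IsProxPoint g x p ↔ ∀ u, g p - g u ≤ ⟪p - x, u - p⟫ := by
  constructor
  · intro hp u
    have hq : HasFDerivAt (fun u => (1 / 2) * ‖u - x‖ ^ 2) (innerSL ℝ (p - x)) p := by
      refine (((hasFDerivAt_id p).sub_const x).norm_sq.const_mul (1 / 2)).congr_fderiv ?_
      ext v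
      simp
    exact hg.sub_le_of_isMinOn_add hq hp u
  · intro h u _
    have hsq : ‖u - x‖ ^ 2 = ‖u - p‖ ^ 2 + 2 * ⟪p - x, u - p⟫ + ‖p - x‖ ^ 2 := by
      rw [show u - x = (u - p) + (p - x) by abel, norm_add_sq_real, real_inner_comm]
    simp only [mem_ofPred_eq, hsq]
    nlinarith [h u, sq_nonneg ‖u - p‖]

theorem ConvexOn.isProxPoint_of_isMinOn_add {g h : E → ℝ} {v p : E} (hg : ConvexOn ℝ univ g)
    (hh : HasFDerivAt h (innerSL ℝ v) p) (hmin : IsMinOn (fun x => g x + h x) univ p) :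
    IsProxPoint g (p - v) p :=
  (isProxPoint_iff hg _ _).2 fun u => by
    simpa using hg.sub_le_of_isMinOn_add hh hmin u

theorem IsProxPoint.norm_sub_le {g : E → ℝ} (hg : ConvexOn ℝ univ g) {a b pa pb : E}
    (ha : IsProxPoint g a pa) (hb : IsProxPoint g b pb) : ‖pa - pb‖ ≤ ‖a - b‖ := by
  have hsa := (isProxPoint_iff hg a pa).1 ha pb
  have hsb := (isProxPoint_iff hg b pb).1 hb pa
  have hmono : ‖pa - pb‖ ^ 2 ≤ ⟪a - b, pa - pb⟫ := by
    rw [← real_inner_self_eq_norm_sq]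
    have : ⟪pa - a, pb - pa⟫ + ⟪pb - b, pa - pb⟫ = ⟪a - b, pa - pb⟫ - ⟪pa - pb, pa - pb⟫ := by
      simp only [inner_sub_left, inner_sub_right, real_inner_comm pb pa]
      ring
    linarith
  nlinarith [real_inner_le_norm (a - b) (pa - pb), norm_nonneg (pa - pb), norm_nonneg (a - b)]

theorem IsProxPoint.norm_sub_le_of_isProxPoint_self {g : E → ℝ} (hg : ConvexOn ℝ univ g)
    {x y w v p : E} (hp : IsProxPoint g (x - w) p) (hy : IsProxPoint g (y - v) y) :
    ‖x - p‖ ≤ ‖x - y‖ + ‖(x - w) - (y - v)‖ :=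
  calc ‖x - p‖ = ‖(x - y) + (y - p)‖ := by rw [sub_add_sub_cancel]
    _ ≤ ‖x - y‖ + ‖y - p‖ := norm_add_le _ _
    _ ≤ ‖x - y‖ + ‖(x - w) - (y - v)‖ := by
      rw [norm_sub_rev y]
      gcongr
      exact hp.norm_sub_le hg hy

end InnerProductSpace

theorem stmt2_general {n : ℕ}
    (f g : EuclideanSpace ℝ (Fin n) → ℝ)
    (hg : ConvexOn ℝ Set.univ g)
    (proxg : EuclideanSpace ℝ (Fin n) → EuclideanSpace ℝ (Fin n))
    (hprox : ∀ x, IsMinOn (fun u => g u + (1 / 2) * ‖u - x‖ ^ 2) Set.univ (proxg x))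
    (G : EuclideanSpace ℝ (Fin n) → EuclideanSpace ℝ (Fin n))
    (hG : ∀ x, G x = x - proxg (x - gradient f x))
    (xk : EuclideanSpace ℝ (Fin n)) (B : EuclideanSpace ℝ (Fin n) →L[ℝ] EuclideanSpace ℝ (Fin n))
    (hBsym : ∀ u v, ⟪B u, v⟫ = ⟪u, B v⟫)
    (M c μ₁ μ₂ δ : ℝ) (hBM : ‖B‖ ≤ M) (hc : 0 < c)
    (hμ₁ : μ₁ ∈ Set.Ioc (0 : ℝ) 1) (hμ₂ : μ₂ ∈ Set.Ioc (0 : ℝ) μ₁)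
    (H : EuclideanSpace ℝ (Fin n) →L[ℝ] EuclideanSpace ℝ (Fin n))
    (hH : H = B + (c + μ₁ * min 1 (‖G xk‖ ^ δ)) • ContinuousLinearMap.id ℝ (EuclideanSpace ℝ (Fin n)))
    (εk xhat : EuclideanSpace ℝ (Fin n))
    (hmin : IsMinOn (fun x => f xk + ⟪gradient f xk, x - xk⟫ + g x
        + (1 / 2) * ⟪x - xk, H (x - xk)⟫ + ⟪εk, x - xk⟫) Set.univ xhat)
    (herr : ‖εk‖ ≤ (μ₂ / 2) * min 1 (‖G xk‖ ^ δ) * ‖xhat - xk‖) :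
    ‖G xk‖ ≤ (3 + M + c) * ‖xhat - xk‖ := by
  set s := c + μ₁ * min 1 (‖G xk‖ ^ δ)
  set d := xhat - xk
  set v := gradient f xk + εk + H d
  have hm : 0 ≤ min 1 (‖G xk‖ ^ δ) ∧ min 1 (‖G xk‖ ^ δ) ≤ 1 :=
    ⟨le_min zero_le_one (by positivity), min_le_left _ _⟩
  have hHsym : (H : EuclideanSpace ℝ (Fin n) →ₗ[ℝ] EuclideanSpace ℝ (Fin n)).IsSymmetric := by
    rw [hH, ContinuousLinearMap.toLinearMap_add, ContinuousLinearMap.toLinearMap_smul,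
      ContinuousLinearMap.coe_id]
    exact LinearMap.IsSymmetric.add hBsym (LinearMap.IsSymmetric.id.smul (conj_trivial s))
  have hxhat : IsProxPoint g (xhat - v) xhat := by
    refine hg.isProxPoint_of_isMinOn_add
      ((hasFDerivAt_inner_add_half_inner_apply hHsym (gradient f xk + εk) xk xhat).const_add
        (f xk)) fun x _ => ?_
    have hle := hmin (Set.mem_univ x)
    simp only [Set.mem_ofPred_eq, inner_add_left] at hle ⊢
    linarith
  have hstep : (xk - gradient f xk) - (xhat - v) = εk + B d + (s - 1) • d := by
    simp only [v, d, hH, add_apply, smul_apply, ContinuousLinearMap.id_apply]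
    module
  have hBd : ‖B d‖ ≤ M * ‖d‖ := B.le_of_opNorm_le hBM d
  have hε : ‖εk‖ ≤ (1 / 2) * ‖d‖ := herr.trans (by
    gcongr; nlinarith [hμ₂.1, hμ₂.2, hμ₁.2, hm.1, hm.2])
  have hs : ‖s - 1‖ ≤ 1 + c := by
    rw [Real.norm_eq_abs, abs_le]; constructor <;> nlinarith [hμ₁.1, hμ₁.2, hm.1, hm.2]
  calc ‖G xk‖ ≤ ‖xk - xhat‖ + ‖(xk - gradient f xk) - (xhat - v)‖ := by
        rw [hG]; exact IsProxPoint.norm_sub_le_of_isProxPoint_self hg (hprox _) hxhat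
    _ ≤ ‖d‖ + (‖εk‖ + ‖B d‖ + ‖s - 1‖ * ‖d‖) := by
        rw [norm_sub_rev, hstep, ← norm_smul]
        gcongr
        exact norm_add₃_le
    _ ≤ (3 + M + c) * ‖d‖ := by nlinarith [norm_nonneg d]

/-- Lemma 3 of the paper: `‖G(x_k)‖ ≤ (3 + M + c)·‖x̂_k − x_k‖`. -/
theorem stmt2 {n : ℕ}
    (f g : EuclideanSpace ℝ (Fin n) → ℝ)
    (hf : ContDiff ℝ 1 f)
    (hg : ConvexOn ℝ Set.univ g) (hgc : Continuous g)
    (proxg : EuclideanSpace ℝ (Fin n) → EuclideanSpace ℝ (Fin n))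
    (hprox : ∀ x, IsMinOn (fun u => g u + (1 / 2) * ‖u - x‖ ^ 2) Set.univ (proxg x))
    (hproxU : ∀ x u, IsMinOn (fun u => g u + (1 / 2) * ‖u - x‖ ^ 2) Set.univ u → u = proxg x)
    (G : EuclideanSpace ℝ (Fin n) → EuclideanSpace ℝ (Fin n))
    (hG : ∀ x, G x = x - proxg (x - gradient f x))
    (xk : EuclideanSpace ℝ (Fin n)) (B : EuclideanSpace ℝ (Fin n) →L[ℝ] EuclideanSpace ℝ (Fin n))
    (hBsym : ∀ u v, ⟪B u, v⟫ = ⟪u, B v⟫)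
    (hBpsd : ∀ v, 0 ≤ ⟪v, B v⟫)
    (M c μ₁ μ₂ δ : ℝ) (hBM : ‖B‖ ≤ M) (hc : 0 < c)
    (hμ₁ : μ₁ ∈ Set.Ioc (0 : ℝ) 1) (hμ₂ : μ₂ ∈ Set.Ioc (0 : ℝ) μ₁)
    (hδ : δ ∈ Set.Icc (0 : ℝ) 1)
    (H : EuclideanSpace ℝ (Fin n) →L[ℝ] EuclideanSpace ℝ (Fin n))
    (hH : H = B + (c + μ₁ * min 1 (‖G xk‖ ^ δ)) • ContinuousLinearMap.id ℝ (EuclideanSpace ℝ (Fin n)))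
    (εk xhat : EuclideanSpace ℝ (Fin n))
    (hmin : IsMinOn (fun x => f xk + ⟪gradient f xk, x - xk⟫ + g x
        + (1 / 2) * ⟪x - xk, H (x - xk)⟫ + ⟪εk, x - xk⟫) Set.univ xhat)
    (herr : ‖εk‖ ≤ (μ₂ / 2) * min 1 (‖G xk‖ ^ δ) * ‖xhat - xk‖) :
    ‖G xk‖ ≤ (3 + M + c) * ‖xhat - xk‖ :=
  stmt2_general f g hg proxg hprox G hG xk B hBsym M c μ₁ μ₂ δ hBM hc hμ₁ hμ₂ H hH εk xhat hmin herr
end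

section
/- Let x_k ∈ ℝⁿ, let H be any symmetric positive semidefinite matrix, and for y ∈ ℝⁿ define r(y) = y − prox_g(y − (∇f(x_k) + H(y − x_k))). Then for every y ∈ ℝⁿ, ‖G(x_k) − r(y)‖ ≤ ‖(I + H)(x_k − y)‖. -/
/-!
The residuals are `G xₖ = xₖ - prox_g a` and `r y = y - prox_g b` with `a - b = d - H d`,
where `d = xₖ - y`. Since `prox_g` is firmly nonexpansive, `p = prox_g a - prox_g b` satisfies
`‖p‖² ≤ ⟪p, d - H d⟫`, i.e. `p` lies in the closed ball of radius `‖d - H d‖ / 2` about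
`(d - H d) / 2`. Hence `‖d - p‖ ≤ ‖d + H d‖ / 2 + ‖d - H d‖ / 2`, and `‖d - H d‖ ≤ ‖d + H d‖`
because `⟪d, H d⟫ ≥ 0`.
-/

open scoped RealInnerProductSpace
open Filter Topology

section ProximalGeometry

variable {E : Type*} [NormedAddCommGroup E] [InnerProductSpace ℝ E]

lemma IsMinOn.prox_segment_ineq {g : E → ℝ} (hg : ConvexOn ℝ Set.univ g) {x u : E}
    (hu : IsMinOn (fun u => g u + (1 / 2) * ‖u - x‖ ^ 2) Set.univ u) (v : E) {t : ℝ}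
    (ht₀ : 0 < t) (ht₁ : t ≤ 1) :
    0 ≤ g v - g u + ⟪u - x, v - u⟫ + t / 2 * ‖v - u‖ ^ 2 := by
  have hmin : g u + 1 / 2 * ‖u - x‖ ^ 2 ≤
      g (u + t • (v - u)) + 1 / 2 * ‖u + t • (v - u) - x‖ ^ 2 :=
    hu (Set.mem_univ _)
  have hconv : g (u + t • (v - u)) ≤ (1 - t) * g u + t * g v := by
    have h := hg.2 (Set.mem_univ u) (Set.mem_univ v) (sub_nonneg.2 ht₁) ht₀.le (by ring)
    rwa [show (1 - t) • u + t • v = u + t • (v - u) by module] at h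
  have hnorm : ‖u + t • (v - u) - x‖ ^ 2
      = ‖u - x‖ ^ 2 + 2 * t * ⟪u - x, v - u⟫ + t ^ 2 * ‖v - u‖ ^ 2 := by
    rw [show u + t • (v - u) - x = (u - x) + t • (v - u) by abel, norm_add_sq_real,
      real_inner_smul_right, norm_smul, Real.norm_eq_abs, abs_of_pos ht₀]
    ring
  have hscaled : 0 ≤ t * (g v - g u + ⟪u - x, v - u⟫ + t / 2 * ‖v - u‖ ^ 2) := by
    nlinarith
  exact nonneg_of_mul_nonneg_right (by linarith) ht₀

lemma IsMinOn.prox_inner_le {g : E → ℝ} (hg : ConvexOn ℝ Set.univ g) {x u : E}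
    (hu : IsMinOn (fun u => g u + (1 / 2) * ‖u - x‖ ^ 2) Set.univ u) (v : E) :
    ⟪x - u, v - u⟫ ≤ g v - g u := by
  have hlim : Tendsto (fun t : ℝ => g v - g u + ⟪u - x, v - u⟫ + t / 2 * ‖v - u‖ ^ 2)
      (𝓝[>] 0) (𝓝 (g v - g u + ⟪u - x, v - u⟫)) := by
    have : Continuous (fun t : ℝ => g v - g u + ⟪u - x, v - u⟫ + t / 2 * ‖v - u‖ ^ 2) := by
      fun_prop
    simpa using this.continuousWithinAt.tendsto (x := 0) (s := Set.Ioi 0)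
  have hsmall : ∀ᶠ t in 𝓝[>] (0 : ℝ), t ∈ Set.Ioc 0 1 := Ioc_mem_nhdsGT zero_lt_one
  have h := ge_of_tendsto hlim (hsmall.mono fun t ht => hu.prox_segment_ineq hg v ht.1 ht.2)
  rw [← neg_sub u x, inner_neg_left]
  linarith

lemma IsMinOn.prox_firmly_nonexpansive {g : E → ℝ} (hg : ConvexOn ℝ Set.univ g) {a b ua ub : E}
    (hua : IsMinOn (fun u => g u + (1 / 2) * ‖u - a‖ ^ 2) Set.univ ua)
    (hub : IsMinOn (fun u => g u + (1 / 2) * ‖u - b‖ ^ 2) Set.univ ub) :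
    ‖ua - ub‖ ^ 2 ≤ ⟪ua - ub, a - b⟫ := by
  have ha := hua.prox_inner_le hg ub
  have hb := hub.prox_inner_le hg ua
  have hsum : ⟪a - ua, ub - ua⟫ + ⟪b - ub, ua - ub⟫ = ‖ua - ub‖ ^ 2 - ⟪ua - ub, a - b⟫ := by
    rw [← neg_sub ua ub, inner_neg_right, real_inner_comm (a - b) (ua - ub),
      ← real_inner_self_eq_norm_sq, neg_add_eq_sub, ← inner_sub_left, ← inner_sub_left]
    congr 1
    abel
  linarith

lemma norm_half_smul_sub_le_of_sq_le_inner {p c : E} (hp : ‖p‖ ^ 2 ≤ ⟪p, c⟫) :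
    ‖(1 / 2 : ℝ) • c - p‖ ≤ ‖c‖ / 2 := by
  have hsq : ‖(1 / 2 : ℝ) • c - p‖ ^ 2 = (‖c‖ / 2) ^ 2 - ⟪p, c⟫ + ‖p‖ ^ 2 := by
    rw [norm_sub_sq_real, norm_smul, real_inner_smul_left, real_inner_comm,
      Real.norm_of_nonneg one_half_pos.le]
    ring
  exact pow_le_pow_iff_left₀ (norm_nonneg _) (by positivity) two_ne_zero |>.1 (by linarith)

lemma norm_sub_le_norm_add_of_inner_nonneg {d w : E} (h : 0 ≤ ⟪d, w⟫) : ‖d - w‖ ≤ ‖d + w‖ := by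
  have hsq : ‖d - w‖ ^ 2 + 4 * ⟪d, w⟫ = ‖d + w‖ ^ 2 := by
    rw [norm_add_sq_real, norm_sub_sq_real]
    ring
  exact pow_le_pow_iff_left₀ (norm_nonneg _) (norm_nonneg _) two_ne_zero |>.1 (by linarith)

lemma norm_sub_le_norm_add_of_sq_le_inner {d w p : E} (hdw : 0 ≤ ⟪d, w⟫)
    (hp : ‖p‖ ^ 2 ≤ ⟪p, d - w⟫) : ‖d - p‖ ≤ ‖d + w‖ :=
  calc ‖d - p‖ = ‖(1 / 2 : ℝ) • (d + w) + ((1 / 2 : ℝ) • (d - w) - p)‖ := by congr 1; module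
    _ ≤ ‖d + w‖ / 2 + ‖d - w‖ / 2 := by
      grw [norm_add_le, norm_half_smul_sub_le_of_sq_le_inner hp, norm_smul,
        Real.norm_of_nonneg one_half_pos.le]
      linarith
    _ ≤ ‖d + w‖ := by linarith [norm_sub_le_norm_add_of_inner_nonneg hdw]

end ProximalGeometry

theorem stmt3_general {n : ℕ}
    (f g : EuclideanSpace ℝ (Fin n) → ℝ)
    (hg : ConvexOn ℝ Set.univ g)
    (proxg : EuclideanSpace ℝ (Fin n) → EuclideanSpace ℝ (Fin n))
    (hprox : ∀ x, IsMinOn (fun u => g u + (1 / 2) * ‖u - x‖ ^ 2) Set.univ (proxg x))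
    (G : EuclideanSpace ℝ (Fin n) → EuclideanSpace ℝ (Fin n))
    (hG : ∀ x, G x = x - proxg (x - gradient f x))
    (xk : EuclideanSpace ℝ (Fin n)) (H : EuclideanSpace ℝ (Fin n) →L[ℝ] EuclideanSpace ℝ (Fin n))
    (hHpsd : ∀ v, 0 ≤ ⟪v, H v⟫)
    (r : EuclideanSpace ℝ (Fin n) → EuclideanSpace ℝ (Fin n))
    (hr : ∀ y, r y = y - proxg (y - (gradient f xk + H (y - xk)))) :
    ∀ y, ‖G xk - r y‖ ≤ ‖(ContinuousLinearMap.id ℝ (EuclideanSpace ℝ (Fin n)) + H) (xk - y)‖ := by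
  intro y
  set a := xk - gradient f xk with ha
  set b := y - (gradient f xk + H (y - xk)) with hb
  have hab : a - b = (xk - y) - H (xk - y) := by
    rw [ha, hb, show y - xk = -(xk - y) by abel, map_neg]
    abel
  have hfirm := (hprox a).prox_firmly_nonexpansive hg (hprox b)
  rw [hab] at hfirm
  have hres : G xk - r y = (xk - y) - (proxg a - proxg b) := by
    rw [hG, hr]
    abel
  rw [hres, add_apply, ContinuousLinearMap.id_apply]
  exact norm_sub_le_norm_add_of_sq_le_inner (hHpsd _) hfirm

/-- For any symmetric positive semidefinite `H` and
`r(y) = y − prox_g(y − (∇f(x_k) + H(y − x_k)))`, one has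
`‖G(x_k) − r(y)‖ ≤ ‖(I + H)(x_k − y)‖` for all `y`. -/
theorem stmt3 {n : ℕ}
    (f g : EuclideanSpace ℝ (Fin n) → ℝ)
    (hf : ContDiff ℝ 1 f)
    (hg : ConvexOn ℝ Set.univ g) (hgc : Continuous g)
    (proxg : EuclideanSpace ℝ (Fin n) → EuclideanSpace ℝ (Fin n))
    (hprox : ∀ x, IsMinOn (fun u => g u + (1 / 2) * ‖u - x‖ ^ 2) Set.univ (proxg x))
    (hproxU : ∀ x u, IsMinOn (fun u => g u + (1 / 2) * ‖u - x‖ ^ 2) Set.univ u → u = proxg x)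
    (G : EuclideanSpace ℝ (Fin n) → EuclideanSpace ℝ (Fin n))
    (hG : ∀ x, G x = x - proxg (x - gradient f x))
    (xk : EuclideanSpace ℝ (Fin n)) (H : EuclideanSpace ℝ (Fin n) →L[ℝ] EuclideanSpace ℝ (Fin n))
    (hHsym : ∀ u v, ⟪H u, v⟫ = ⟪u, H v⟫)
    (hHpsd : ∀ v, 0 ≤ ⟪v, H v⟫)
    (r : EuclideanSpace ℝ (Fin n) → EuclideanSpace ℝ (Fin n))
    (hr : ∀ y, r y = y - proxg (y - (gradient f xk + H (y - xk)))) :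
    ∀ y, ‖G xk - r y‖ ≤ ‖(ContinuousLinearMap.id ℝ (EuclideanSpace ℝ (Fin n)) + H) (xk - y)‖ :=
  stmt3_general f g hg proxg hprox G hG xk H hHpsd r hr
end

section
/- Let x_k ∈ ℝⁿ, let H_k = B_k + (c + μ₁·min{1, ‖G(x_k)‖^δ})·I where B_k is symmetric positive semidefinite, c > 0, μ₁ ∈ (0,1], μ₂ ∈ (0, μ₁], δ ∈ [0,1], let l_k(x) = f(x_k) + ⟨∇f(x_k), x − x_k⟩ + g(x), and let x̂_k be the minimizer of x ↦ l_k(x) + (1/2)⟨x − x_k, H_k(x − x_k)⟩ + ⟨ε_k, x − x_k⟩ with ‖ε_k‖ ≤ (μ₂/2)·min{1, ‖G(x_k)‖^δ}·‖x̂_k − x_k‖. Then l_k(x_k) − l_k(x̂_k) ≥ (c/2)·‖x̂_k − x_k‖². -/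
open scoped RealInnerProductSpace

section ModelDecrease

variable {E : Type*} [NormedAddCommGroup E] [InnerProductSpace ℝ E]

theorem inner_add_smul_id_apply_self (B : E →L[ℝ] E) (a : ℝ) (v : E) :
    ⟪v, (B + a • ContinuousLinearMap.id ℝ E) v⟫ = ⟪v, B v⟫ + a * ‖v‖ ^ 2 := by
  simp only [add_apply, FunLike.coe_smul, Pi.smul_apply,
    ContinuousLinearMap.id_apply, inner_add_right, real_inner_smul_right,
    real_inner_self_eq_norm_sq]

theorem neg_mul_sq_le_inner_of_norm_le {ε d : E} {K : ℝ} (h : ‖ε‖ ≤ K * ‖d‖) :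
    -(K * ‖d‖ ^ 2) ≤ ⟪ε, d⟫ := by
  have hcs : -(‖ε‖ * ‖d‖) ≤ ⟪ε, d⟫ := neg_le_of_abs_le (abs_real_inner_le_norm ε d)
  nlinarith [mul_le_mul_of_nonneg_right h (norm_nonneg d)]

theorem IsMinOn.add_quadratic_add_inner_le {l : E → ℝ} {H : E →L[ℝ] E} {ε x₀ y : E}
    (hmin : IsMinOn (fun x => l x + (1 / 2) * ⟪x - x₀, H (x - x₀)⟫ + ⟪ε, x - x₀⟫)
      Set.univ y) :
    l y + (1 / 2) * ⟪y - x₀, H (y - x₀)⟫ + ⟪ε, y - x₀⟫ ≤ l x₀ := by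
  simpa using hmin (Set.mem_univ x₀)

/-- Compare the model at its minimizer `y` with its value at `x₀`: the part `σ` of the shift
pays for the inexactness `ε`, `B` contributes a nonnegative term, and `c` is left over. -/
theorem sub_ge_of_isMinOn_shifted_model {l : E → ℝ} {B : E →L[ℝ] E}
    (hB : ∀ v, 0 ≤ ⟪v, B v⟫) {c σ : ℝ} {ε x₀ y : E}
    (hmin : IsMinOn (fun x => l x + (1 / 2) *
      ⟪x - x₀, (B + (c + σ) • ContinuousLinearMap.id ℝ E) (x - x₀)⟫ + ⟪ε, x - x₀⟫)
      Set.univ y)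
    (hε : ‖ε‖ ≤ (σ / 2) * ‖y - x₀‖) :
    l x₀ - l y ≥ (c / 2) * ‖y - x₀‖ ^ 2 := by
  have hle := hmin.add_quadratic_add_inner_le
  rw [inner_add_smul_id_apply_self] at hle
  have hεd := neg_mul_sq_le_inner_of_norm_le hε
  nlinarith [hB (y - x₀)]

end ModelDecrease

theorem stmt4_general {n : ℕ}
    (G : EuclideanSpace ℝ (Fin n) → EuclideanSpace ℝ (Fin n))
    (xk : EuclideanSpace ℝ (Fin n)) (B : EuclideanSpace ℝ (Fin n) →L[ℝ] EuclideanSpace ℝ (Fin n))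
    (hBpsd : ∀ v, 0 ≤ ⟪v, B v⟫)
    (c μ₁ μ₂ δ : ℝ)
    (hμ₂ : μ₂ ∈ Set.Ioc (0 : ℝ) μ₁)
    (H : EuclideanSpace ℝ (Fin n) →L[ℝ] EuclideanSpace ℝ (Fin n))
    (hH : H = B + (c + μ₁ * min 1 (‖G xk‖ ^ δ)) • ContinuousLinearMap.id ℝ (EuclideanSpace ℝ (Fin n)))
    (lk : EuclideanSpace ℝ (Fin n) → ℝ)
    (εk xhat : EuclideanSpace ℝ (Fin n))
    (hmin : IsMinOn (fun x => lk x + (1 / 2) * ⟪x - xk, H (x - xk)⟫ + ⟪εk, x - xk⟫)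
        Set.univ xhat)
    (herr : ‖εk‖ ≤ (μ₂ / 2) * min 1 (‖G xk‖ ^ δ) * ‖xhat - xk‖) :
    lk xk - lk xhat ≥ (c / 2) * ‖xhat - xk‖ ^ 2 := by
  subst hH
  set m := min 1 (‖G xk‖ ^ δ)
  have hm : 0 ≤ m := le_min zero_le_one (Real.rpow_nonneg (norm_nonneg _) δ)
  refine sub_ge_of_isMinOn_shifted_model hBpsd hmin (herr.trans ?_)
  rw [mul_div_right_comm μ₁]
  gcongr
  exact hμ₂.2

/-- The model decrease `l_k(x_k) − l_k(x̂_k) ≥ (c/2)·‖x̂_k − x_k‖²`. -/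
theorem stmt4 {n : ℕ}
    (f g : EuclideanSpace ℝ (Fin n) → ℝ)
    (hf : ContDiff ℝ 1 f)
    (hg : ConvexOn ℝ Set.univ g) (hgc : Continuous g)
    (proxg : EuclideanSpace ℝ (Fin n) → EuclideanSpace ℝ (Fin n))
    (hprox : ∀ x, IsMinOn (fun u => g u + (1 / 2) * ‖u - x‖ ^ 2) Set.univ (proxg x))
    (hproxU : ∀ x u, IsMinOn (fun u => g u + (1 / 2) * ‖u - x‖ ^ 2) Set.univ u → u = proxg x)
    (G : EuclideanSpace ℝ (Fin n) → EuclideanSpace ℝ (Fin n))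
    (hG : ∀ x, G x = x - proxg (x - gradient f x))
    (xk : EuclideanSpace ℝ (Fin n)) (B : EuclideanSpace ℝ (Fin n) →L[ℝ] EuclideanSpace ℝ (Fin n))
    (hBsym : ∀ u v, ⟪B u, v⟫ = ⟪u, B v⟫)
    (hBpsd : ∀ v, 0 ≤ ⟪v, B v⟫)
    (c μ₁ μ₂ δ : ℝ) (hc : 0 < c)
    (hμ₁ : μ₁ ∈ Set.Ioc (0 : ℝ) 1) (hμ₂ : μ₂ ∈ Set.Ioc (0 : ℝ) μ₁)
    (hδ : δ ∈ Set.Icc (0 : ℝ) 1)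
    (H : EuclideanSpace ℝ (Fin n) →L[ℝ] EuclideanSpace ℝ (Fin n))
    (hH : H = B + (c + μ₁ * min 1 (‖G xk‖ ^ δ)) • ContinuousLinearMap.id ℝ (EuclideanSpace ℝ (Fin n)))
    (lk : EuclideanSpace ℝ (Fin n) → ℝ)
    (hlk : ∀ x, lk x = f xk + ⟪gradient f xk, x - xk⟫ + g x)
    (εk xhat : EuclideanSpace ℝ (Fin n))
    (hmin : IsMinOn (fun x => lk x + (1 / 2) * ⟪x - xk, H (x - xk)⟫ + ⟪εk, x - xk⟫)
        Set.univ xhat)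
    (herr : ‖εk‖ ≤ (μ₂ / 2) * min 1 (‖G xk‖ ^ δ) * ‖xhat - xk‖) :
    lk xk - lk xhat ≥ (c / 2) * ‖xhat - xk‖ ^ 2 :=
  stmt4_general G xk B hBpsd c μ₁ μ₂ δ hμ₂ H hH lk εk xhat hmin herr
end

section
/- Let x_k ∈ ℝⁿ, let H_k be symmetric with H_k ⪰ cI for some c > 0, let q_k(x) = f(x_k) + ⟨∇f(x_k), x − x_k⟩ + g(x) + (1/2)⟨x − x_k, H_k(x − x_k)⟩, let x̄_k be the exact minimizer of q_k, and let x̂_k be the minimizer of x ↦ q_k(x) + ⟨ε_k, x − x_k⟩ with ‖ε_k‖ ≤ (μ₂/2)·min{1, ‖G(x_k)‖^δ}·‖x̂_k − x_k‖ for μ₂ ∈ (0,1], δ ∈ [0,1]. Then ‖x̂_k − x̄_k‖ ≤ (μ₂/(2c))·(1 + ‖H_k‖)·‖x̂_k − x_k‖. -/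
open scoped RealInnerProductSpace

/-- Lemma 4.2 of the paper: the distance between the inexact solution `x̂_k` and the exact
solution `x̄_k` of the subproblem satisfies
`‖x̂_k − x̄_k‖ ≤ (μ₂/(2c))(1 + ‖H_k‖)‖x̂_k − x_k‖`. -/
theorem stmt10 {n : ℕ}
    (f g : EuclideanSpace ℝ (Fin n) → ℝ)
    (hf : ContDiff ℝ 1 f)
    (hg : ConvexOn ℝ Set.univ g) (hgc : Continuous g)
    (proxg : EuclideanSpace ℝ (Fin n) → EuclideanSpace ℝ (Fin n))
    (hprox : ∀ x, IsMinOn (fun u => g u + (1 / 2) * ‖u - x‖ ^ 2) Set.univ (proxg x))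
    (hproxU : ∀ x u, IsMinOn (fun u => g u + (1 / 2) * ‖u - x‖ ^ 2) Set.univ u → u = proxg x)
    (G : EuclideanSpace ℝ (Fin n) → EuclideanSpace ℝ (Fin n))
    (hG : ∀ x, G x = x - proxg (x - gradient f x))
    (xk : EuclideanSpace ℝ (Fin n)) (H : EuclideanSpace ℝ (Fin n) →L[ℝ] EuclideanSpace ℝ (Fin n))
    (hHsym : ∀ u v, ⟪H u, v⟫ = ⟪u, H v⟫)
    (c : ℝ) (hc : 0 < c)
    (hHc : ∀ v, c * ‖v‖ ^ 2 ≤ ⟪v, H v⟫)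
    (μ₂ δ : ℝ) (hμ₂ : μ₂ ∈ Set.Ioc (0 : ℝ) 1) (hδ : δ ∈ Set.Icc (0 : ℝ) 1)
    (qk : EuclideanSpace ℝ (Fin n) → ℝ)
    (hqk : ∀ x, qk x = f xk + ⟪gradient f xk, x - xk⟫ + g x
        + (1 / 2) * ⟪x - xk, H (x - xk)⟫)
    (xbar : EuclideanSpace ℝ (Fin n)) (hxbar : IsMinOn qk Set.univ xbar)
    (εk xhat : EuclideanSpace ℝ (Fin n))
    (hmin : IsMinOn (fun x => qk x + ⟪εk, x - xk⟫) Set.univ xhat)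
    (herr : ‖εk‖ ≤ (μ₂ / 2) * min 1 (‖G xk‖ ^ δ) * ‖xhat - xk‖) :
    ‖xhat - xbar‖ ≤ (μ₂ / (2 * c)) * (1 + ‖H‖) * ‖xhat - xk‖ := by
  set d : EuclideanSpace ℝ (Fin n) := xhat - xbar with hd
  have hexp : ∀ (w z : EuclideanSpace ℝ (Fin n)) (t : ℝ),
      ⟪w + t • z, H (w + t • z)⟫ = ⟪w, H w⟫ + 2*t*⟪w, H z⟫ + t^2*⟪z, H z⟫ := by
    intro w z t
    have h1 : ⟪z, H w⟫ = ⟪w, H z⟫ := by rw [← hHsym]; exact real_inner_comm _ _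
    simp only [map_add, map_smul, inner_add_left, inner_add_right,
      real_inner_smul_left, real_inner_smul_right]
    rw [h1]; ring
  have hMdd : 0 ≤ ⟪d, H d⟫ := le_trans (by positivity) (hHc d)
  have key : ∀ t : ℝ, 0 < t → t ≤ 1 → ⟪d, H d⟫ + ⟪εk, d⟫ ≤ t * ⟪d, H d⟫ := by
    intro t ht0 ht1
    set y1 : EuclideanSpace ℝ (Fin n) := xbar + t • d with hy1
    set y2 : EuclideanSpace ℝ (Fin n) := xhat + t • (-d) with hy2
    have hy1' : y1 = (1 - t) • xbar + t • xhat := by rw [hy1, hd]; module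
    have hy2' : y2 = (1 - t) • xhat + t • xbar := by rw [hy2, hd]; module
    have hg1 : g y1 ≤ (1 - t) * g xbar + t * g xhat := by
      rw [hy1']
      exact hg.2 (Set.mem_univ xbar) (Set.mem_univ xhat) (by linarith) ht0.le (by ring)
    have hg2 : g y2 ≤ (1 - t) * g xhat + t * g xbar := by
      rw [hy2']
      exact hg.2 (Set.mem_univ xhat) (Set.mem_univ xbar) (by linarith) ht0.le (by ring)
    have h1 : qk xbar ≤ qk y1 := isMinOn_iff.mp hxbar y1 (Set.mem_univ _)
    have h2 : qk xhat + ⟪εk, xhat - xk⟫ ≤ qk y2 + ⟪εk, y2 - xk⟫ :=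
      isMinOn_iff.mp hmin y2 (Set.mem_univ _)
    have e1 : y1 - xk = (xbar - xk) + t • d := by rw [hy1]; module
    have e2 : y2 - xk = (xhat - xk) + t • (-d) := by rw [hy2]; module
    rw [hqk y1, hqk xbar, e1, hexp] at h1
    rw [hqk y2, hqk xhat, e2, hexp] at h2
    simp only [inner_add_right, real_inner_smul_right, inner_neg_left, inner_neg_right,
      map_neg] at h1 h2
    have hrel : ⟪xhat - xk, H d⟫ = ⟪xbar - xk, H d⟫ + ⟪d, H d⟫ := by
      have h : xhat - xk = (xbar - xk) + d := by rw [hd]; module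
      rw [h, inner_add_left]
    rw [hrel] at h2
    have ineq1 : 0 ≤ t * ⟪gradient f xk, d⟫ + t * (g xhat - g xbar)
        + t * ⟪xbar - xk, H d⟫ + t ^ 2 / 2 * ⟪d, H d⟫ := by linarith [h1, hg1]
    have ineq2 : 0 ≤ -(t * ⟪gradient f xk, d⟫) + t * (g xbar - g xhat)
        - t * (⟪xbar - xk, H d⟫ + ⟪d, H d⟫) + t ^ 2 / 2 * ⟪d, H d⟫ - t * ⟪εk, d⟫ := by
      linarith [h2, hg2]
    have hsum : 0 ≤ t * (t * ⟪d, H d⟫ - ⟪d, H d⟫ - ⟪εk, d⟫) := by linarith [ineq1, ineq2]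
    have := (mul_nonneg_iff_of_pos_left ht0).mp hsum
    linarith
  have hS : ⟪d, H d⟫ + ⟪εk, d⟫ ≤ 0 := by
    by_contra h
    push_neg at h
    set S := ⟪d, H d⟫ + ⟪εk, d⟫ with hSdef
    set M := ⟪d, H d⟫ with hMdef
    have ht0 : 0 < min 1 (S / (2 * (M + 1))) := by
      apply lt_min one_pos
      apply div_pos h (by linarith)
    have ht1 : min 1 (S / (2 * (M + 1))) ≤ 1 := min_le_left _ _
    have hk := key _ ht0 ht1
    have htle : min 1 (S / (2 * (M + 1))) ≤ S / (2 * (M + 1)) := min_le_right _ _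
    have hM1 : 0 < M + 1 := by linarith
    have : min 1 (S / (2 * (M + 1))) * M ≤ S / 2 := by
      have h1 : min 1 (S / (2 * (M + 1))) * M ≤ (S / (2 * (M + 1))) * M :=
        mul_le_mul_of_nonneg_right htle hMdd
      have h2 : (S / (2 * (M + 1))) * M ≤ S / 2 := by
        rw [div_mul_eq_mul_div, div_le_div_iff₀ (by linarith) two_pos]
        nlinarith
      linarith
    linarith
  have hCS : -⟪εk, d⟫ ≤ ‖εk‖ * ‖d‖ := by
    have := abs_real_inner_le_norm εk d
    have := neg_abs_le ⟪εk, d⟫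
    linarith
  have h3 : c * ‖d‖ ^ 2 ≤ ‖εk‖ * ‖d‖ := by
    have := hHc d
    linarith
  rcases eq_or_lt_of_le (norm_nonneg d) with h0 | hdpos
  · rw [← h0]
    have h1 : 0 ≤ μ₂ / (2 * c) := div_nonneg hμ₂.1.le (by linarith)
    have h2 : 0 ≤ (1 : ℝ) + ‖H‖ := by linarith [norm_nonneg H]
    exact mul_nonneg (mul_nonneg h1 h2) (norm_nonneg _)
  · have h4 : c * ‖d‖ ≤ ‖εk‖ := by nlinarith
    have hmle : min 1 (‖G xk‖ ^ δ) ≤ 1 := min_le_left _ _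
    have hμX : 0 ≤ (μ₂ / 2) * ‖xhat - xk‖ :=
      mul_nonneg (by linarith [hμ₂.1]) (norm_nonneg _)
    have goal' : c * ‖d‖ ≤ (μ₂ / 2) * (1 + ‖H‖) * ‖xhat - xk‖ := by
      nlinarith [h4, herr, hmle, hμX, norm_nonneg H, mul_nonneg hμX (norm_nonneg H)]
    have hrhs : (μ₂ / (2 * c)) * (1 + ‖H‖) * ‖xhat - xk‖
        = ((μ₂ / 2) * (1 + ‖H‖) * ‖xhat - xk‖) / c := by
      ring
    rw [hrhs, le_div_iff₀ hc]
    nlinarith [goal']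
end

section
/- Let S* = {x : G(x) = 0} be the (closed, nonempty) stationary set, let x̄ ∈ S*, and suppose ∇²f is Lipschitz continuous with constant L_C on the open ball B(x̄, ε₀). Let x_k ∈ B(x̄, ε₀/2), let H_k = ∇²f(x_k) + ([−λ_min(∇²f(x_k))]₊ + c + μ₁·min{1, ‖G(x_k)‖^δ})·I with c > 0, μ₁ ∈ (0,1], δ ∈ [0,1], and let x̄_k be the exact minimizer of q_k(x) = f(x_k) + ⟨∇f(x_k), x − x_k⟩ + g(x) + (1/2)⟨x − x_k, H_k(x − x_k)⟩. Then ‖x_k − x̄_k‖ ≤ (L_C/(2c))·dist(x_k, S*)² + (1/c)·([−λ_min(∇²f(x_k))]₊ + 2c + μ₁)·dist(x_k, S*). -/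
/-!
Let `y` be a stationary point near `x_k`. Being a fixed point of the proximal map, `y` satisfies
the variational inequality of `g` against `∇f(y)`; as a minimizer of the model, `x̄_k` satisfies
it against `∇f(x_k) + H_k(x̄_k - x_k)`. Adding the two and using `H_k ⪰ c·I` gives
`c‖y - x̄_k‖ ≤ ‖∇f(x_k) - ∇f(y) + H_k(y - x_k)‖`, and the Lipschitz Hessian bounds the right side by
`(L_C/2)‖y - x_k‖² + s‖y - x_k‖`, where `s` is the shift added to `∇²f(x_k)` in `H_k`. The triangle
inequality then bounds `‖x_k - x̄_k‖`, and letting `‖y - x_k‖` decrease to `dist(x_k, S*)` finishes.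
-/

open scoped RealInnerProductSpace
open Set Filter Topology Metric

theorem ConvexOn.nonneg_add_sub_of_isMinOn_add {E : Type*} [AddCommGroup E] [Module ℝ E]
    {g φ : E → ℝ} (hg : ConvexOn ℝ univ g) {x v : E} {A K : ℝ}
    (hφ : ∀ t : ℝ, φ (x + t • v) = φ x + t * A + t ^ 2 * K) (hmin : IsMinOn (φ + g) univ x) :
    0 ≤ A + (g (x + v) - g x) := by
  have hslope : ∀ t ∈ Ioc (0 : ℝ) 1, 0 ≤ A + (g (x + v) - g x) + t * K := by
    rintro t ⟨ht0, ht1⟩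
    have hconv : g (x + t • v) ≤ (1 - t) * g x + t * g (x + v) := by
      have h := hg.2 (mem_univ x) (mem_univ (x + v)) (sub_nonneg.2 ht1) ht0.le (by ring)
      rwa [show (1 - t) • x + t • (x + v) = x + t • v by module] at h
    have hle := isMinOn_univ_iff.1 hmin (x + t • v)
    simp only [Pi.add_apply, hφ t] at hle
    nlinarith
  have hlim : Tendsto (fun t : ℝ => A + (g (x + v) - g x) + t * K) (𝓝[>] 0)
      (𝓝 (A + (g (x + v) - g x) + 0 * K)) :=
    ((continuous_const.add (continuous_id.mul continuous_const)).tendsto 0).mono_left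
      nhdsWithin_le_nhds
  rw [zero_mul, add_zero] at hlim
  exact ge_of_tendsto hlim (eventually_of_mem (Ioc_mem_nhdsGT zero_lt_one) hslope)

theorem norm_sub_sub_le_of_norm_fderiv_sub_le {E F : Type*} [NormedAddCommGroup E]
    [NormedSpace ℝ E] [NormedAddCommGroup F] [NormedSpace ℝ F] {φ : E → F} {Φ : E → E →L[ℝ] F}
    {x y : E} {L : ℝ} (hφ : ∀ z ∈ segment ℝ x y, HasFDerivAt φ (Φ z) z)
    (hΦ : ∀ z ∈ segment ℝ x y, ‖Φ z - Φ x‖ ≤ L * ‖z - x‖) :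
    ‖φ y - φ x - Φ x (y - x)‖ ≤ L / 2 * ‖y - x‖ ^ 2 := by
  set a := y - x
  have hseg : ∀ t ∈ Icc (0 : ℝ) 1, x + t • a ∈ segment ℝ x y := by
    rw [segment_eq_image']
    exact fun t ht => ⟨t, ht, rfl⟩
  have hγ : ∀ t ∈ Icc (0 : ℝ) 1, HasDerivAt (fun t : ℝ => φ (x + t • a) - φ x - t • Φ x a)
      (Φ (x + t • a) a - Φ x a) t := by
    intro t ht
    have hline : HasDerivAt (fun t : ℝ => x + t • a) a t := by
      simpa using ((hasDerivAt_id t).smul_const a).const_add x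
    have h := (((hφ _ (hseg t ht)).comp_hasDerivAt t hline).sub_const (φ x)).fun_sub
      ((hasDerivAt_id t).smul_const (Φ x a))
    rwa [one_smul] at h
  have hB : ∀ t : ℝ, HasDerivAt (fun t : ℝ => L / 2 * ‖a‖ ^ 2 * t ^ 2) (L * ‖a‖ ^ 2 * t) t := by
    intro t
    exact ((hasDerivAt_pow 2 t).const_mul (L / 2 * ‖a‖ ^ 2)).congr_deriv (by push_cast; ring)
  have hbound : ∀ t ∈ Ico (0 : ℝ) 1, ‖Φ (x + t • a) a - Φ x a‖ ≤ L * ‖a‖ ^ 2 * t := by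
    intro t ht
    calc ‖Φ (x + t • a) a - Φ x a‖ = ‖(Φ (x + t • a) - Φ x) a‖ := rfl
      _ ≤ ‖Φ (x + t • a) - Φ x‖ * ‖a‖ := ContinuousLinearMap.le_opNorm _ _
      _ ≤ L * ‖x + t • a - x‖ * ‖a‖ := by
        gcongr
        exact hΦ _ (hseg t (Ico_subset_Icc_self ht))
      _ = L * ‖a‖ ^ 2 * t := by
        rw [add_sub_cancel_left, norm_smul, Real.norm_of_nonneg ht.1]
        ring
  have h := image_norm_le_of_norm_deriv_right_le_deriv_boundary
    (fun t ht => (hγ t ht).continuousAt.continuousWithinAt)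
    (fun t ht => (hγ t (Ico_subset_Icc_self ht)).hasDerivWithinAt) (by simp) hB hbound
    (right_mem_Icc.2 zero_le_one)
  simpa [a] using h

theorem le_apply_infDist_of_forall_dist_lt {X : Type*} [PseudoMetricSpace X] {S : Set X}
    {x : X} {ρ a : ℝ} {F : ℝ → ℝ} (hS : S.Nonempty) (hF : ContinuousAt F (infDist x S))
    (hρ : infDist x S < ρ) (h : ∀ y ∈ S, dist x y < ρ → a ≤ F (dist x y)) :
    a ≤ F (infDist x S) := by
  by_contra! hlt
  obtain ⟨η, hη, hFη⟩ := Metric.eventually_nhds_iff.1 (hF.eventually (gt_mem_nhds hlt))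
  obtain ⟨y, hy, hdist⟩ := (infDist_lt_iff hS).1 (lt_min (lt_add_of_pos_right _ hη) hρ)
  have hclose : dist (dist x y) (infDist x S) < η := by
    rw [Real.dist_eq, abs_of_nonneg (sub_nonneg.2 (infDist_le_dist_of_mem hy))]
    linarith [min_le_left (infDist x S + η) ρ]
  exact (hFη hclose).not_ge (h y hy (hdist.trans_le (min_le_right _ _)))

section InnerProductSpace

variable {E : Type*} [NormedAddCommGroup E] [InnerProductSpace ℝ E] {g : E → ℝ}

theorem ConvexOn.inner_add_sub_nonneg_of_isMinOn_prox (hg : ConvexOn ℝ univ g) {x a : E}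
    (hx : IsMinOn (fun u => g u + (1 / 2) * ‖u - (x - a)‖ ^ 2) univ x) (u : E) :
    0 ≤ ⟪a, u - x⟫ + (g u - g x) := by
  have hexp : ∀ t : ℝ, (1 / 2) * ‖x + t • (u - x) - (x - a)‖ ^ 2
      = (1 / 2) * ‖x - (x - a)‖ ^ 2 + t * ⟪a, u - x⟫ + t ^ 2 * ((1 / 2) * ‖u - x‖ ^ 2) := by
    intro t
    rw [show x + t • (u - x) - (x - a) = a + t • (u - x) by module, sub_sub_cancel,
      norm_add_sq_real, real_inner_smul_right, norm_smul, Real.norm_eq_abs, mul_pow, sq_abs]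
    ring
  have h := hg.nonneg_add_sub_of_isMinOn_add (φ := fun u => (1 / 2) * ‖u - (x - a)‖ ^ 2) hexp
    (by convert hx using 2; simp only [Pi.add_apply]; ring)
  rwa [add_sub_cancel] at h

theorem ConvexOn.inner_add_sub_nonneg_of_isMinOn_model (hg : ConvexOn ℝ univ g)
    {H : E →L[ℝ] E} (hH : (H : E →ₗ[ℝ] E).IsSymmetric) {C : ℝ} {b x₀ x : E}
    (hx : IsMinOn (fun y => C + ⟪b, y - x₀⟫ + g y + (1 / 2) * ⟪y - x₀, H (y - x₀)⟫) univ x)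
    (u : E) : 0 ≤ ⟪b + H (x - x₀), u - x⟫ + (g u - g x) := by
  set φ : E → ℝ := fun y => C + ⟪b, y - x₀⟫ + (1 / 2) * ⟪y - x₀, H (y - x₀)⟫
  have hexp : ∀ t : ℝ, φ (x + t • (u - x))
      = φ x + t * ⟪b + H (x - x₀), u - x⟫ + t ^ 2 * ((1 / 2) * ⟪u - x, H (u - x)⟫) := by
    intro t
    have hsymm : ⟪x - x₀, H (u - x)⟫ = ⟪u - x, H (x - x₀)⟫ :=
      (hH (x - x₀) (u - x)).symm.trans (real_inner_comm _ _)
    simp only [φ, show x + t • (u - x) - x₀ = (x - x₀) + t • (u - x) by module, inner_add_left,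
      inner_add_right, map_add, map_smul, real_inner_smul_left, real_inner_smul_right, hsymm]
    linear_combination -t * real_inner_comm (u - x) (H (x - x₀))
  have h := hg.nonneg_add_sub_of_isMinOn_add hexp
    (by convert hx using 2; simp only [φ, Pi.add_apply]; ring)
  rwa [add_sub_cancel] at h

theorem mul_norm_sub_le_of_variational_ineqs {H : E →L[ℝ] E} {c : ℝ}
    (hcoer : ∀ v, c * ‖v‖ ^ 2 ≤ ⟪v, H v⟫) {a b x₀ x y : E}
    (hx : ∀ u, 0 ≤ ⟪a, u - x⟫ + (g u - g x))
    (hy : ∀ u, 0 ≤ ⟪b + H (y - x₀), u - y⟫ + (g u - g y)) :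
    c * ‖x - y‖ ≤ ‖b - a + H (x - x₀)‖ := by
  have hsum : ⟪x - y, H (x - y)⟫ ≤ ⟪b - a + H (x - x₀), x - y⟫ := by
    have hsplit : ⟪b - a + H (x - x₀), x - y⟫ - ⟪H (x - y), x - y⟫
        = (⟪a, y - x⟫ + (g y - g x)) + (⟪b + H (y - x₀), x - y⟫ + (g x - g y)) := by
      rw [show y - x = -(x - y) by abel, inner_neg_right,
        show y - x₀ = (x - x₀) - (x - y) by abel, map_sub H (x - x₀) (x - y)]
      simp only [inner_add_left, inner_sub_left]
      ring
    have := add_nonneg (hx y) (hy x)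
    rw [real_inner_comm]
    linarith
  rcases (norm_nonneg (x - y)).eq_or_lt with hw | hw
  · rw [← hw, mul_zero]
    exact norm_nonneg _
  · refine le_of_mul_le_mul_right ?_ hw
    calc c * ‖x - y‖ * ‖x - y‖ = c * ‖x - y‖ ^ 2 := by ring
      _ ≤ ⟪b - a + H (x - x₀), x - y⟫ := (hcoer _).trans hsum
      _ ≤ ‖b - a + H (x - x₀)‖ * ‖x - y‖ := real_inner_le_norm _ _

theorem mul_norm_sq_le_inner_add_smul_id {T : E →L[ℝ] E} {lam c s : ℝ}
    (hT : ∀ v, lam * ‖v‖ ^ 2 ≤ ⟪v, T v⟫) (hs : c ≤ lam + s) (v : E) :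
    c * ‖v‖ ^ 2 ≤ ⟪v, (T + s • ContinuousLinearMap.id ℝ E) v⟫ := by
  rw [add_apply, inner_add_right, smul_apply,
    ContinuousLinearMap.id_apply, real_inner_smul_right, real_inner_self_eq_norm_sq]
  nlinarith [hT v, sq_nonneg ‖v‖]

theorem LinearMap.IsSymmetric.add_smul_id {T : E →L[ℝ] E} (hT : (T : E →ₗ[ℝ] E).IsSymmetric)
    (s : ℝ) : ((T + s • ContinuousLinearMap.id ℝ E : E →L[ℝ] E) : E →ₗ[ℝ] E).IsSymmetric := by
  rw [ContinuousLinearMap.toLinearMap_add, ContinuousLinearMap.toLinearMap_smul,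
    ContinuousLinearMap.coe_id]
  exact hT.add (LinearMap.IsSymmetric.id.smul (conj_trivial s))

theorem ContDiff.isSymmetric_of_hasFDerivAt_gradient [CompleteSpace E] {f : E → ℝ}
    (hf : ContDiff ℝ 2 f) {x : E} {T : E →L[ℝ] E} (hT : HasFDerivAt (gradient f) T x) :
    (T : E →ₗ[ℝ] E).IsSymmetric := by
  have hfderiv : fderiv ℝ f = fun y => innerSL ℝ (gradient f y) := by
    ext y v
    exact InnerProductSpace.toDual_symm_apply.symm
  have hT' : fderiv ℝ (fderiv ℝ f) x = (innerSL ℝ).comp T := by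
    rw [hfderiv]
    exact ((innerSL ℝ).hasFDerivAt.comp x hT).fderiv
  intro u v
  have h := (hf.contDiffAt (x := x)).isSymmSndFDerivAt (by simp) v u
  simp only [hT', ContinuousLinearMap.coe_comp, Function.comp_apply, innerSL_apply_apply] at h
  rw [ContinuousLinearMap.coe_coe, ← h, real_inner_comm]

theorem mul_norm_sub_le_of_stationary [CompleteSpace E] {f : E → ℝ} {Hess : E → E →L[ℝ] E}
    {x y xm : E} {L c s : ℝ} (hHess : ∀ z ∈ segment ℝ x y, HasFDerivAt (gradient f) (Hess z) z)
    (hLip : ∀ z ∈ segment ℝ x y, ‖Hess z - Hess x‖ ≤ L * ‖z - x‖) (hs : 0 ≤ s)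
    (hcoer : ∀ v, c * ‖v‖ ^ 2 ≤ ⟪v, (Hess x + s • ContinuousLinearMap.id ℝ E) v⟫)
    (hy : ∀ u, 0 ≤ ⟪gradient f y, u - y⟫ + (g u - g y))
    (hxm : ∀ u, 0 ≤ ⟪gradient f x + (Hess x + s • ContinuousLinearMap.id ℝ E) (xm - x), u - xm⟫
      + (g u - g xm)) :
    c * ‖y - xm‖ ≤ L / 2 * ‖y - x‖ ^ 2 + s * ‖y - x‖ := by
  calc c * ‖y - xm‖
      ≤ ‖gradient f x - gradient f y + (Hess x + s • ContinuousLinearMap.id ℝ E) (y - x)‖ :=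
        mul_norm_sub_le_of_variational_ineqs hcoer hy hxm
    _ = ‖s • (y - x) - (gradient f y - gradient f x - Hess x (y - x))‖ := by
        simp only [add_apply, smul_apply, ContinuousLinearMap.id_apply]
        congr 1
        abel
    _ ≤ ‖s • (y - x)‖ + ‖gradient f y - gradient f x - Hess x (y - x)‖ := norm_sub_le _ _
    _ ≤ s * ‖y - x‖ + L / 2 * ‖y - x‖ ^ 2 := by
        rw [norm_smul, Real.norm_of_nonneg hs]
        exact add_le_add le_rfl (norm_sub_sub_le_of_norm_fderiv_sub_le hHess hLip)
    _ = L / 2 * ‖y - x‖ ^ 2 + s * ‖y - x‖ := add_comm _ _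

theorem norm_sub_le_of_stationary [CompleteSpace E] {f : E → ℝ} {Hess : E → E →L[ℝ] E}
    {x y xm : E} {L c s : ℝ} (hc : 0 < c)
    (hHess : ∀ z ∈ segment ℝ x y, HasFDerivAt (gradient f) (Hess z) z)
    (hLip : ∀ z ∈ segment ℝ x y, ‖Hess z - Hess x‖ ≤ L * ‖z - x‖) (hs : 0 ≤ s)
    (hcoer : ∀ v, c * ‖v‖ ^ 2 ≤ ⟪v, (Hess x + s • ContinuousLinearMap.id ℝ E) v⟫)
    (hy : ∀ u, 0 ≤ ⟪gradient f y, u - y⟫ + (g u - g y))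
    (hxm : ∀ u, 0 ≤ ⟪gradient f x + (Hess x + s • ContinuousLinearMap.id ℝ E) (xm - x), u - xm⟫
      + (g u - g xm)) :
    ‖x - xm‖ ≤ L / (2 * c) * ‖x - y‖ ^ 2 + 1 / c * (s + c) * ‖x - y‖ := by
  have hkey := mul_norm_sub_le_of_stationary hHess hLip hs hcoer hy hxm
  rw [norm_sub_rev y x] at hkey
  have htri := norm_sub_le_norm_sub_add_norm_sub x y xm
  rw [show L / (2 * c) * ‖x - y‖ ^ 2 + 1 / c * (s + c) * ‖x - y‖
      = (L / 2 * ‖x - y‖ ^ 2 + (s + c) * ‖x - y‖) / c by field_simp, le_div_iff₀ hc]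
  nlinarith

end InnerProductSpace

theorem stmt11_general {n : ℕ}
    (f g : EuclideanSpace ℝ (Fin n) → ℝ)
    (hf : ContDiff ℝ 2 f)
    (hg : ConvexOn ℝ Set.univ g)
    (proxg : EuclideanSpace ℝ (Fin n) → EuclideanSpace ℝ (Fin n))
    (hprox : ∀ y, IsMinOn (fun u => g u + (1 / 2) * ‖u - y‖ ^ 2) Set.univ (proxg y))
    (G : EuclideanSpace ℝ (Fin n) → EuclideanSpace ℝ (Fin n))
    (hG : ∀ y, G y = y - proxg (y - gradient f y))
    (Hess : EuclideanSpace ℝ (Fin n) → (EuclideanSpace ℝ (Fin n) →L[ℝ] EuclideanSpace ℝ (Fin n)))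
    (hHess : ∀ y, HasFDerivAt (gradient f) (Hess y) y)
    (xbar : EuclideanSpace ℝ (Fin n)) (hxbar : G xbar = 0)
    (ε₀ LC : ℝ) (hε₀ : 0 < ε₀)
    (hLip : ∀ u ∈ Metric.ball xbar ε₀, ∀ v ∈ Metric.ball xbar ε₀,
        ‖Hess u - Hess v‖ ≤ LC * ‖u - v‖)
    (xk : EuclideanSpace ℝ (Fin n)) (hxk : xk ∈ Metric.ball xbar (ε₀ / 2))
    (c μ₁ δ : ℝ) (hc : 0 < c)
    (hμ₁ : μ₁ ∈ Set.Ioc (0 : ℝ) 1)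
    (lam : ℝ) (hlam : IsGreatest {t : ℝ | ∀ v, t * ‖v‖ ^ 2 ≤ ⟪v, Hess xk v⟫} lam)
    (H : EuclideanSpace ℝ (Fin n) →L[ℝ] EuclideanSpace ℝ (Fin n))
    (hH : H = Hess xk + (max (-lam) 0 + c + μ₁ * min 1 (‖G xk‖ ^ δ))
        • ContinuousLinearMap.id ℝ (EuclideanSpace ℝ (Fin n)))
    (xbark : EuclideanSpace ℝ (Fin n))
    (hxbark : IsMinOn (fun y => f xk + ⟪gradient f xk, y - xk⟫ + g y
        + (1 / 2) * ⟪y - xk, H (y - xk)⟫) Set.univ xbark) :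
    ‖xk - xbark‖ ≤ (LC / (2 * c)) * Metric.infDist xk {y : EuclideanSpace ℝ (Fin n) | G y = 0} ^ 2
      + (1 / c) * (max (-lam) 0 + 2 * c + μ₁) * Metric.infDist xk {y : EuclideanSpace ℝ (Fin n) | G y = 0} := by
  subst hH
  set s := max (-lam) 0 + c + μ₁ * min 1 (‖G xk‖ ^ δ)
  have hs : c ≤ s ∧ c ≤ lam + s ∧ s + c ≤ max (-lam) 0 + 2 * c + μ₁ := by
    have := mul_nonneg hμ₁.1.le (le_min zero_le_one (by positivity) : 0 ≤ min 1 (‖G xk‖ ^ δ))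
    have := mul_le_of_le_one_right hμ₁.1.le (min_le_left 1 (‖G xk‖ ^ δ))
    refine ⟨?_, ?_, ?_⟩ <;> linarith [le_max_left (-lam) 0, le_max_right (-lam) 0]
  have hsymm := (hf.isSymmetric_of_hasFDerivAt_gradient (hHess xk)).add_smul_id s
  have hcoer := mul_norm_sq_le_inner_add_smul_id hlam.1 hs.2.1
  have hmodel := hg.inner_add_sub_nonneg_of_isMinOn_model hsymm hxbark
  have hstat : ∀ y, G y = 0 → ∀ u, 0 ≤ ⟪gradient f y, u - y⟫ + (g u - g y) := by
    intro y hy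
    have hfix : proxg (y - gradient f y) = y := (sub_eq_zero.1 ((hG y).symm.trans hy)).symm
    exact hg.inner_add_sub_nonneg_of_isMinOn_prox (hfix ▸ hprox (y - gradient f y) :)
  have hxk' : xk ∈ ball xbar ε₀ := ball_subset_ball (by linarith) hxk
  have hS : xbar ∈ {y | G y = 0} := hxbar
  refine le_apply_infDist_of_forall_dist_lt
    (F := fun r => LC / (2 * c) * r ^ 2 + 1 / c * (max (-lam) 0 + 2 * c + μ₁) * r) ⟨xbar, hS⟩
    (by fun_prop) ((infDist_le_dist_of_mem hS).trans_lt (mem_ball.1 hxk)) fun y hy hdist => ?_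
  have hy' : y ∈ ball xbar ε₀ := by
    rw [mem_ball] at hxk ⊢
    linarith [dist_triangle_left y xbar xk]
  rw [dist_eq_norm]
  calc ‖xk - xbark‖ ≤ LC / (2 * c) * ‖xk - y‖ ^ 2 + 1 / c * (s + c) * ‖xk - y‖ :=
        norm_sub_le_of_stationary hc (fun z _ => hHess z)
          (fun z hz => hLip z ((convex_ball xbar ε₀).segment_subset hxk' hy' hz) xk hxk')
          (hc.le.trans hs.1) hcoer (hstat y hy) hmodel
    _ ≤ _ := by gcongr _ + 1 / c * ?_ * _; exact hs.2.2

/-- Lemma 4.3 of the paper: bound on `‖x_k − x̄_k‖` in terms of `dist(x_k, S*)`. -/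
theorem stmt11 {n : ℕ}
    (f g : EuclideanSpace ℝ (Fin n) → ℝ)
    (hf : ContDiff ℝ 2 f)
    (hg : ConvexOn ℝ Set.univ g) (hgc : Continuous g)
    (proxg : EuclideanSpace ℝ (Fin n) → EuclideanSpace ℝ (Fin n))
    (hprox : ∀ y, IsMinOn (fun u => g u + (1 / 2) * ‖u - y‖ ^ 2) Set.univ (proxg y))
    (hproxU : ∀ y u, IsMinOn (fun u => g u + (1 / 2) * ‖u - y‖ ^ 2) Set.univ u → u = proxg y)
    (G : EuclideanSpace ℝ (Fin n) → EuclideanSpace ℝ (Fin n))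
    (hG : ∀ y, G y = y - proxg (y - gradient f y))
    (Hess : EuclideanSpace ℝ (Fin n) → (EuclideanSpace ℝ (Fin n) →L[ℝ] EuclideanSpace ℝ (Fin n)))
    (hHess : ∀ y, HasFDerivAt (gradient f) (Hess y) y)
    (xbar : EuclideanSpace ℝ (Fin n)) (hxbar : G xbar = 0)
    (ε₀ LC : ℝ) (hε₀ : 0 < ε₀) (hLC : 0 ≤ LC)
    (hLip : ∀ u ∈ Metric.ball xbar ε₀, ∀ v ∈ Metric.ball xbar ε₀,
        ‖Hess u - Hess v‖ ≤ LC * ‖u - v‖)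
    (xk : EuclideanSpace ℝ (Fin n)) (hxk : xk ∈ Metric.ball xbar (ε₀ / 2))
    (c μ₁ δ : ℝ) (hc : 0 < c)
    (hμ₁ : μ₁ ∈ Set.Ioc (0 : ℝ) 1) (hδ : δ ∈ Set.Icc (0 : ℝ) 1)
    (lam : ℝ) (hlam : IsGreatest {t : ℝ | ∀ v, t * ‖v‖ ^ 2 ≤ ⟪v, Hess xk v⟫} lam)
    (H : EuclideanSpace ℝ (Fin n) →L[ℝ] EuclideanSpace ℝ (Fin n))
    (hH : H = Hess xk + (max (-lam) 0 + c + μ₁ * min 1 (‖G xk‖ ^ δ))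
        • ContinuousLinearMap.id ℝ (EuclideanSpace ℝ (Fin n)))
    (xbark : EuclideanSpace ℝ (Fin n))
    (hxbark : IsMinOn (fun y => f xk + ⟪gradient f xk, y - xk⟫ + g y
        + (1 / 2) * ⟪y - xk, H (y - xk)⟫) Set.univ xbark) :
    ‖xk - xbark‖ ≤ (LC / (2 * c)) * Metric.infDist xk {y : EuclideanSpace ℝ (Fin n) | G y = 0} ^ 2
      + (1 / c) * (max (-lam) 0 + 2 * c + μ₁) * Metric.infDist xk {y : EuclideanSpace ℝ (Fin n) | G y = 0} :=
  stmt11_general f g hf hg proxg hprox G hG Hess hHess xbar hxbar ε₀ LC hε₀ hLip xk hxk c μ₁ δ hc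
    hμ₁ lam hlam H hH xbark hxbark
end

section
/- Let x_k ∈ ℝⁿ, let H_k = ∇²f(x_k) + ([−λ_min(∇²f(x_k))]₊ + c + μ₁·min{1, ‖G(x_k)‖^δ})·I with c > 0, τ ∈ (0, c), μ₁ ∈ (0,1], μ₂ ∈ (0, μ₁], δ ∈ [0,1], let x̂_k minimize x ↦ f(x_k) + ⟨∇f(x_k), x − x_k⟩ + g(x) + (1/2)⟨x − x_k, H_k(x − x_k)⟩ + ⟨ε_k, x − x_k⟩ with ‖ε_k‖ ≤ (μ₂/2)·min{1, ‖G(x_k)‖^δ}·‖x̂_k − x_k‖, set d_k = x̂_k − x_k, and suppose ∇²f is L_C-Lipschitz on an open set containing the segment from x_k to x_k + d_k. Then for every θ ∈ (0,1) and every integer j ≥ 0, φ(x_k + θ^j d_k) − φ(x_k) + (τ θ^j/2)‖d_k‖² ≤ −(θ^j/2)·‖d_k‖²·((c − τ) − (L_C/3)‖d_k‖). In particular, if ‖d_k‖ ≤ 3(c − τ)/L_C then the unit step is accepted: φ(x_k + d_k) ≤ φ(x_k) − (τ/2)‖d_k‖². -/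
/-! With `d = x̂ - x`, Taylor's formula with an `L`-Lipschitz Hessian bounds `f (x + α d)` by
the quadratic model plus `(L/6) α³ ‖d‖³`, and convexity bounds `g (x + α d)` by linear
interpolation. Minimality of `x̂` against the model value at `x` bounds the first-order terms by
`-(1/2)⟪d, (∇²f(x) + σ) d⟫ - ⟪ε, d⟫`, where `σ = [-λ]₊ + c + μ₁ min{1, ‖G x‖^δ}`. The curvature
left over after the step `α d` is `(1 - α)⟪d, ∇²f(x) d⟫ ≥ (1 - α) λ ‖d‖² ≥ -[-λ]₊ ‖d‖²`, which the
shift absorbs; `μ₁ min{1, ‖G x‖^δ}` absorbs the error term, and `c` leaves the decrease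
`(α/2) c ‖d‖²`, against which the cubic remainder costs at most `(α/6) L ‖d‖³` since `α³ ≤ α`. -/

open scoped RealInnerProductSpace

open Set

theorem le_on_Icc_of_hasDerivAt_le {φ φ' B B' : ℝ → ℝ} {a b : ℝ}
    (hφ : ∀ t, HasDerivAt φ (φ' t) t) (hB : ∀ t, HasDerivAt B (B' t) t) (ha : φ a ≤ B a)
    (hle : ∀ t ∈ Ico a b, φ' t ≤ B' t) : ∀ t ∈ Icc a b, φ t ≤ B t :=
  image_le_of_deriv_right_le_deriv_boundary
    (fun t _ => (hφ t).continuousAt.continuousWithinAt) (fun t _ => (hφ t).hasDerivWithinAt) ha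
    (fun t _ => (hB t).continuousAt.continuousWithinAt) (fun t _ => (hB t).hasDerivWithinAt) hle

variable {E : Type*} [NormedAddCommGroup E] [InnerProductSpace ℝ E]

theorem inner_hessian_line_le {Hess : E → E →L[ℝ] E} {x v : E} {L : ℝ}
    (hL : ∀ y ∈ segment ℝ x (x + v), ‖Hess y - Hess x‖ ≤ L * ‖y - x‖) {t : ℝ} (ht : t ∈ Icc 0 1) :
    ⟪v, Hess (x + t • v) v⟫ ≤ ⟪v, Hess x v⟫ + L * ‖v‖ ^ 3 * t := by
  have hseg : x + t • v ∈ segment ℝ x (x + v) := by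
    rw [segment_eq_image']
    exact ⟨t, ht, by simp⟩
  set A := Hess (x + t • v) - Hess x
  calc ⟪v, Hess (x + t • v) v⟫ = ⟪v, Hess x v⟫ + ⟪v, A v⟫ := by
        rw [sub_apply, inner_sub_right]; ring
    _ ≤ ⟪v, Hess x v⟫ + ‖v‖ * (‖A‖ * ‖v‖) := by
        gcongr ⟪v, Hess x v⟫ + ?_
        exact (real_inner_le_norm _ _).trans (by gcongr; exact A.le_opNorm v)
    _ ≤ ⟪v, Hess x v⟫ + ‖v‖ * (L * ‖x + t • v - x‖ * ‖v‖) := by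
        grw [hL _ hseg]
    _ = ⟪v, Hess x v⟫ + L * ‖v‖ ^ 3 * t := by
        rw [add_sub_cancel_left, norm_smul, Real.norm_of_nonneg ht.1]; ring

variable [CompleteSpace E]

theorem taylor_upper_bound_of_lipschitz_hessian {f : E → ℝ} (hf : Differentiable ℝ f)
    {Hess : E → E →L[ℝ] E} (hHess : ∀ y, HasFDerivAt (gradient f) (Hess y) y) {x v : E} {L : ℝ}
    (hL : ∀ y ∈ segment ℝ x (x + v), ‖Hess y - Hess x‖ ≤ L * ‖y - x‖) :
    f (x + v) ≤ f x + ⟪gradient f x, v⟫ + (1 / 2) * ⟪v, Hess x v⟫ + L / 6 * ‖v‖ ^ 3 := by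
  set K := L * ‖v‖ ^ 3
  have hline : ∀ t : ℝ, HasDerivAt (fun t : ℝ => x + t • v) v t := fun t => by
    simpa using ((hasDerivAt_id t).smul_const v).const_add x
  have hderiv_f : ∀ t : ℝ,
      HasDerivAt (fun t => f (x + t • v)) ⟪gradient f (x + t • v), v⟫ t := fun t => by
    have := ((hf _).hasGradientAt.hasFDerivAt).comp_hasDerivAt t (hline t)
    rwa [InnerProductSpace.toDual_apply_apply] at this
  have hderiv_grad : ∀ t : ℝ, HasDerivAt (fun t => ⟪gradient f (x + t • v), v⟫)
      ⟪v, Hess (x + t • v) v⟫ t := fun t => by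
    simpa [real_inner_comm] using
      ((hHess _).comp_hasDerivAt t (hline t)).inner ℝ (hasDerivAt_const t v)
  have hgrad_le : ∀ t ∈ Icc (0 : ℝ) 1, ⟪gradient f (x + t • v), v⟫
      ≤ ⟪gradient f x, v⟫ + ⟪v, Hess x v⟫ * t + K / 2 * t ^ 2 := by
    refine le_on_Icc_of_hasDerivAt_le hderiv_grad (fun t => ?_) (by simp)
      (fun t ht => inner_hessian_line_le hL (Ico_subset_Icc_self ht))
    refine ((((hasDerivAt_id t).const_mul _).const_add _).add
      ((hasDerivAt_pow 2 t).const_mul (K / 2))).congr_deriv ?_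
    push_cast; ring
  have hf_le : ∀ t ∈ Icc (0 : ℝ) 1, f (x + t • v)
      ≤ f x + ⟪gradient f x, v⟫ * t + ⟪v, Hess x v⟫ / 2 * t ^ 2 + K / 6 * t ^ 3 := by
    refine le_on_Icc_of_hasDerivAt_le hderiv_f (fun t => ?_) (by simp)
      (fun t ht => hgrad_le t (Ico_subset_Icc_self ht))
    refine (((((hasDerivAt_id t).const_mul _).const_add _).add
      ((hasDerivAt_pow 2 t).const_mul _)).add ((hasDerivAt_pow 3 t).const_mul (K / 6))).congr_deriv ?_
    push_cast; ring
  have hat_one := hf_le 1 (right_mem_Icc.2 zero_le_one)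
  simp only [one_smul, one_pow, mul_one] at hat_one
  linarith

theorem regularizedNewton_sufficient_decrease {f g : E → ℝ} (hf : Differentiable ℝ f)
    (hg : ConvexOn ℝ univ g) {Hess : E → E →L[ℝ] E}
    (hHess : ∀ y, HasFDerivAt (gradient f) (Hess y) y) {x xhat ε : E} {lam σ β c L α : ℝ}
    (hlam : ∀ v, lam * ‖v‖ ^ 2 ≤ ⟪v, Hess x v⟫) (hσ : max (-lam) 0 + c + 2 * β ≤ σ)
    (hmin : IsMinOn (fun y => f x + ⟪gradient f x, y - x⟫ + g y
        + (1 / 2) * ⟪y - x, (Hess x + σ • ContinuousLinearMap.id ℝ E) (y - x)⟫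
        + ⟪ε, y - x⟫) univ xhat)
    (hε : ‖ε‖ ≤ β * ‖xhat - x‖)
    (hL : ∀ y ∈ segment ℝ x xhat, ‖Hess y - Hess x‖ ≤ L * ‖y - x‖) (hα : α ∈ Icc 0 1) :
    f (x + α • (xhat - x)) + g (x + α • (xhat - x))
      ≤ f x + g x - α / 2 * ‖xhat - x‖ ^ 2 * (c - L / 3 * ‖xhat - x‖) := by
  set d := xhat - x
  have htaylor : f (x + α • d) ≤ f x + α * ⟪gradient f x, d⟫ + α ^ 2 / 2 * ⟪d, Hess x d⟫
      + L / 6 * α ^ 3 * ‖d‖ ^ 3 := by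
    have hsub : segment ℝ x (x + α • d) ⊆ segment ℝ x xhat :=
      (convex_segment x xhat).segment_subset (left_mem_segment ℝ x xhat) <| by
        rw [segment_eq_image']; exact ⟨α, hα, rfl⟩
    have := taylor_upper_bound_of_lipschitz_hessian hf hHess fun y hy => hL y (hsub hy)
    rw [norm_smul, Real.norm_of_nonneg hα.1, map_smul, real_inner_smul_left, real_inner_smul_right,
      real_inner_smul_right] at this
    linarith
  have hconvex : g (x + α • d) ≤ g x + α * (g xhat - g x) := by
    have := hg.2 (mem_univ x) (mem_univ xhat) (sub_nonneg.2 hα.2) hα.1 (sub_add_cancel 1 α)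
    rw [show (1 - α) • x + α • xhat = x + α • d by module, smul_eq_mul, smul_eq_mul] at this
    linarith
  have hmodel : ⟪gradient f x, d⟫ + g xhat + (1 / 2) * (⟪d, Hess x d⟫ + σ * ‖d‖ ^ 2)
      + ⟪ε, d⟫ ≤ g x := by
    have := hmin (mem_univ x)
    simp only [mem_ofPred_eq, sub_self, inner_zero_right, map_zero, mul_zero, add_zero] at this
    rw [add_apply, smul_apply, ContinuousLinearMap.id_apply,
      inner_add_right, real_inner_smul_right, real_inner_self_eq_norm_sq] at this
    linarith
  have herr : -⟪ε, d⟫ ≤ β * ‖d‖ ^ 2 :=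
    calc -⟪ε, d⟫ ≤ ‖ε‖ * ‖d‖ := by
          rw [← inner_neg_left]; exact (real_inner_le_norm _ _).trans_eq (by rw [norm_neg])
      _ ≤ β * ‖d‖ * ‖d‖ := by gcongr
      _ = β * ‖d‖ ^ 2 := by ring
  have hLd : 0 ≤ L * ‖d‖ := by
    simpa [d] using (norm_nonneg _).trans (hL xhat (right_mem_segment ℝ x xhat))
  have hshift : 0 ≤ (1 - α) * lam + max (-lam) 0 := by
    rcases le_total lam 0 with hl | hl
    · rw [max_eq_left (neg_nonneg.2 hl)]; nlinarith [hα.1]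
    · rw [max_eq_right (neg_nonpos.2 hl)]; nlinarith [hα.2]
  have hdescent : ⟪gradient f x, d⟫ + g xhat - g x
      ≤ β * ‖d‖ ^ 2 - (⟪d, Hess x d⟫ + σ * ‖d‖ ^ 2) / 2 := by
    linarith
  have hcurv : c * ‖d‖ ^ 2 ≤ (1 - α) * ⟪d, Hess x d⟫ + (σ - 2 * β) * ‖d‖ ^ 2 := by
    nlinarith [mul_le_mul_of_nonneg_left (hlam d) (sub_nonneg.2 hα.2),
      mul_nonneg hshift (sq_nonneg ‖d‖)]
  have hcube : L * α ^ 3 * ‖d‖ ^ 3 ≤ L * α * ‖d‖ ^ 3 := by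
    have hα3 : 0 ≤ α - α ^ 3 := by nlinarith [hα.1, hα.2]
    nlinarith [mul_nonneg (mul_nonneg hLd (sq_nonneg ‖d‖)) hα3]
  linarith [mul_le_mul_of_nonneg_left hdescent hα.1, mul_le_mul_of_nonneg_left hcurv hα.1]

theorem stmt13_general {n : ℕ}
    (f g : EuclideanSpace ℝ (Fin n) → ℝ)
    (hf : ContDiff ℝ 2 f)
    (hg : ConvexOn ℝ Set.univ g)
    (G : EuclideanSpace ℝ (Fin n) → EuclideanSpace ℝ (Fin n))
    (Hess : EuclideanSpace ℝ (Fin n) → (EuclideanSpace ℝ (Fin n) →L[ℝ] EuclideanSpace ℝ (Fin n)))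
    (hHess : ∀ y, HasFDerivAt (gradient f) (Hess y) y)
    (xk : EuclideanSpace ℝ (Fin n))
    (c τ μ₁ μ₂ δ : ℝ) (hτ : τ ∈ Set.Ioo 0 c)
    (hμ₂ : μ₂ ∈ Set.Ioc (0 : ℝ) μ₁)
    (lam : ℝ) (hlam : IsGreatest {t : ℝ | ∀ v, t * ‖v‖ ^ 2 ≤ ⟪v, Hess xk v⟫} lam)
    (H : EuclideanSpace ℝ (Fin n) →L[ℝ] EuclideanSpace ℝ (Fin n))
    (hH : H = Hess xk + (max (-lam) 0 + c + μ₁ * min 1 (‖G xk‖ ^ δ))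
        • ContinuousLinearMap.id ℝ (EuclideanSpace ℝ (Fin n)))
    (εk xhat : EuclideanSpace ℝ (Fin n))
    (hmin : IsMinOn (fun y => f xk + ⟪gradient f xk, y - xk⟫ + g y
        + (1 / 2) * ⟪y - xk, H (y - xk)⟫ + ⟪εk, y - xk⟫) Set.univ xhat)
    (herr : ‖εk‖ ≤ (μ₂ / 2) * min 1 (‖G xk‖ ^ δ) * ‖xhat - xk‖)
    (d : EuclideanSpace ℝ (Fin n)) (hd : d = xhat - xk)
    (LC : ℝ)
    (U : Set (EuclideanSpace ℝ (Fin n))) (hseg : segment ℝ xk (xk + d) ⊆ U)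
    (hLip : ∀ u ∈ U, ∀ v ∈ U, ‖Hess u - Hess v‖ ≤ LC * ‖u - v‖) :
    (∀ θ ∈ Set.Ioo (0 : ℝ) 1, ∀ j : ℕ,
      (f (xk + θ ^ j • d) + g (xk + θ ^ j • d)) - (f xk + g xk)
          + (τ * θ ^ j / 2) * ‖d‖ ^ 2
        ≤ -(θ ^ j / 2) * ‖d‖ ^ 2 * ((c - τ) - (LC / 3) * ‖d‖)) ∧
    (‖d‖ ≤ 3 * (c - τ) / LC →
      f (xk + d) + g (xk + d) ≤ f xk + g xk - (τ / 2) * ‖d‖ ^ 2) := by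
  subst hH hd
  have hm : 0 ≤ min 1 (‖G xk‖ ^ δ) := le_min zero_le_one (Real.rpow_nonneg (norm_nonneg _) δ)
  have hLipseg : ∀ y ∈ segment ℝ xk xhat, ‖Hess y - Hess xk‖ ≤ LC * ‖y - xk‖ := by
    rw [add_sub_cancel] at hseg
    exact fun y hy => hLip y (hseg hy) xk (hseg (left_mem_segment ℝ xk xhat))
  have hshift : max (-lam) 0 + c + 2 * (μ₂ / 2 * min 1 (‖G xk‖ ^ δ))
      ≤ max (-lam) 0 + c + μ₁ * min 1 (‖G xk‖ ^ δ) := by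
    linarith [mul_le_mul_of_nonneg_right hμ₂.2 hm]
  have hdecrease := fun α (hα : α ∈ Set.Icc (0 : ℝ) 1) =>
    regularizedNewton_sufficient_decrease (hf.differentiable two_ne_zero) hg hHess hlam.1 hshift
      hmin herr hLipseg hα
  refine ⟨fun θ hθ j => ?_, fun hsmall => ?_⟩
  · have := hdecrease (θ ^ j) ⟨pow_nonneg hθ.1.le j, pow_le_one₀ hθ.1.le hθ.2.le⟩
    linarith
  · have hgap : 0 ≤ (c - τ) - LC / 3 * ‖xhat - xk‖ := by
      rcases le_or_gt LC 0 with hLC | hLC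
      · nlinarith [hτ.2, norm_nonneg (xhat - xk)]
      · nlinarith [(le_div_iff₀ hLC).1 hsmall]
    have := hdecrease 1 (right_mem_Icc.2 zero_le_one)
    rw [one_smul] at this
    nlinarith [mul_nonneg (sq_nonneg ‖xhat - xk‖) hgap]

/-- Sufficient decrease along the Newton direction; in particular the unit step is
accepted whenever `‖d_k‖ ≤ 3(c − τ)/L_C`. -/
theorem stmt13 {n : ℕ}
    (f g : EuclideanSpace ℝ (Fin n) → ℝ)
    (hf : ContDiff ℝ 2 f)
    (hg : ConvexOn ℝ Set.univ g) (hgc : Continuous g)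
    (proxg : EuclideanSpace ℝ (Fin n) → EuclideanSpace ℝ (Fin n))
    (hprox : ∀ y, IsMinOn (fun u => g u + (1 / 2) * ‖u - y‖ ^ 2) Set.univ (proxg y))
    (hproxU : ∀ y u, IsMinOn (fun u => g u + (1 / 2) * ‖u - y‖ ^ 2) Set.univ u → u = proxg y)
    (G : EuclideanSpace ℝ (Fin n) → EuclideanSpace ℝ (Fin n))
    (hG : ∀ y, G y = y - proxg (y - gradient f y))
    (Hess : EuclideanSpace ℝ (Fin n) → (EuclideanSpace ℝ (Fin n) →L[ℝ] EuclideanSpace ℝ (Fin n)))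
    (hHess : ∀ y, HasFDerivAt (gradient f) (Hess y) y)
    (xk : EuclideanSpace ℝ (Fin n))
    (c τ μ₁ μ₂ δ : ℝ) (hc : 0 < c) (hτ : τ ∈ Set.Ioo 0 c)
    (hμ₁ : μ₁ ∈ Set.Ioc (0 : ℝ) 1) (hμ₂ : μ₂ ∈ Set.Ioc (0 : ℝ) μ₁)
    (hδ : δ ∈ Set.Icc (0 : ℝ) 1)
    (lam : ℝ) (hlam : IsGreatest {t : ℝ | ∀ v, t * ‖v‖ ^ 2 ≤ ⟪v, Hess xk v⟫} lam)
    (H : EuclideanSpace ℝ (Fin n) →L[ℝ] EuclideanSpace ℝ (Fin n))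
    (hH : H = Hess xk + (max (-lam) 0 + c + μ₁ * min 1 (‖G xk‖ ^ δ))
        • ContinuousLinearMap.id ℝ (EuclideanSpace ℝ (Fin n)))
    (εk xhat : EuclideanSpace ℝ (Fin n))
    (hmin : IsMinOn (fun y => f xk + ⟪gradient f xk, y - xk⟫ + g y
        + (1 / 2) * ⟪y - xk, H (y - xk)⟫ + ⟪εk, y - xk⟫) Set.univ xhat)
    (herr : ‖εk‖ ≤ (μ₂ / 2) * min 1 (‖G xk‖ ^ δ) * ‖xhat - xk‖)
    (d : EuclideanSpace ℝ (Fin n)) (hd : d = xhat - xk)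
    (LC : ℝ) (hLC : 0 ≤ LC)
    (U : Set (EuclideanSpace ℝ (Fin n))) (hU : IsOpen U) (hseg : segment ℝ xk (xk + d) ⊆ U)
    (hLip : ∀ u ∈ U, ∀ v ∈ U, ‖Hess u - Hess v‖ ≤ LC * ‖u - v‖) :
    (∀ θ ∈ Set.Ioo (0 : ℝ) 1, ∀ j : ℕ,
      (f (xk + θ ^ j • d) + g (xk + θ ^ j • d)) - (f xk + g xk)
          + (τ * θ ^ j / 2) * ‖d‖ ^ 2
        ≤ -(θ ^ j / 2) * ‖d‖ ^ 2 * ((c - τ) - (LC / 3) * ‖d‖)) ∧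
    (‖d‖ ≤ 3 * (c - τ) / LC →
      f (xk + d) + g (xk + d) ≤ f xk + g xk - (τ / 2) * ‖d‖ ^ 2) :=
  stmt13_general f g hf hg G Hess hHess xk c τ μ₁ μ₂ δ hτ hμ₂ lam hlam H hH εk xhat hmin herr d hd
    LC U hseg hLip
end
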